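/- arXiv:1012.1923 — 10 statements merged into one kernel-verified Lean document; each statement's English description precedes it below -/
import Mathlib

section
/- If a Γ-AG-groupoid G has a left identity e (i.e., eγa = a for all a ∈ G, γ ∈ Γ), then the operation is independent of the Γ-element: aαb = aβb for all a, b ∈ G and α, β ∈ Γ. Hence G becomes an ordinary AG-groupoid with left identity. -/
theorem mul_eq_mul_mul_of_leftIdentity {G Γ : Type*} {mul : G → Γ → G → G}
    (inv : ∀ (a b c : G) (γ δ : Γ), mul (mul a γ b) δ c = mul (mul c γ b) δ a)
    {e : G} (he : ∀ (a : G) (γ : Γ), mul e γ a = a) (a b : G) (α γ : Γ) :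
    mul a α b = mul (mul b γ a) α e :=
  calc mul a α b = mul (mul e γ a) α b := by rw [he]
    _ = mul (mul b γ a) α e := inv e a b γ α

theorem stmt_0 {G Γ : Type*} (mul : G → Γ → G → G)
    (inv : ∀ (a b c : G) (γ δ : Γ), mul (mul a γ b) δ c = mul (mul c γ b) δ a)
    (e : G) (he : ∀ (a : G) (γ : Γ), mul e γ a = a) :
    ∀ (a b : G) (α β : Γ), mul a α b = mul a β b := by
  intro a b α β
  have swap := mul_eq_mul_mul_of_leftIdentity inv he
  calc mul a α b = mul (mul b β a) α e := swap a b α β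
    _ = mul (mul (mul a β b) β e) α e := by rw [← swap b a β β]
    _ = mul (mul e β e) α (mul a β b) := inv _ _ _ _ _
    _ = mul a β b := by rw [he, he]
end

section
/- Every Γ-AG**-groupoid satisfies the Γ-paramedial law: (xαy)β(lγm) = (mαl)β(yγx) for all x, y, l, m ∈ G and α, β, γ ∈ Γ. -/
section GammaAG

variable {G Γ : Type*} (mul : G → Γ → G → G)

theorem gammaAG_medial
    (inv : ∀ (a b c : G) (γ δ : Γ), mul (mul a γ b) δ c = mul (mul c γ b) δ a)
    (a b c d : G) (α β γ : Γ) :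
    mul (mul a α b) β (mul c γ d) = mul (mul a α c) β (mul b γ d) :=
  calc mul (mul a α b) β (mul c γ d)
      = mul (mul (mul c γ d) α b) β a := inv ..
    _ = mul (mul (mul b γ d) α c) β a := by rw [inv c d b γ α]
    _ = mul (mul a α c) β (mul b γ d) := inv ..

theorem gammaAG_paramedial
    (inv : ∀ (a b c : G) (γ δ : Γ), mul (mul a γ b) δ c = mul (mul c γ b) δ a)
    (star : ∀ (a b c : G) (α β : Γ), mul a α (mul b β c) = mul b α (mul a β c))
    (x y l m : G) (α β γ : Γ) :
    mul (mul x α y) β (mul l γ m) = mul (mul m α l) β (mul y γ x) :=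
  calc mul (mul x α y) β (mul l γ m)
      = mul l β (mul (mul x α y) γ m) := star ..
    _ = mul l β (mul (mul m α y) γ x) := by rw [inv x y m α γ]
    _ = mul (mul m α y) β (mul l γ x) := star ..
    _ = mul (mul m α l) β (mul y γ x) := gammaAG_medial mul inv ..

end GammaAG

theorem stmt_2 {G Γ : Type*} (mul : G → Γ → G → G)
    (inv : ∀ (a b c : G) (γ δ : Γ), mul (mul a γ b) δ c = mul (mul c γ b) δ a)
    (star : ∀ (a b c : G) (α β : Γ), mul a α (mul b β c) = mul b α (mul a β c)) :
    ∀ (x y l m : G) (α β γ : Γ),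
      mul (mul x α y) β (mul l γ m) = mul (mul m α l) β (mul y γ x) :=
  gammaAG_paramedial mul inv star
end

section
/- If L is a left Γ-ideal of a Γ-AG**-groupoid G, then L ∪ LΓG is a (two-sided) Γ-ideal of G. -/
/-! In a Γ-AG**-groupoid, `g γ (l δ x) = l γ (g δ x)` shows that `LΓG` is a left Γ-ideal, and
the left invertive law `(l δ x) γ g = (g δ x) γ l` shows that `(LΓG)ΓG ⊆ GΓL ⊆ L`. -/

def gprod {G Γ : Type*} (mul : G → Γ → G → G) (A B : Set G) : Set G :=
  {c | ∃ a ∈ A, ∃ b ∈ B, ∃ γ : Γ, c = mul a γ b}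

section

variable {G Γ : Type*} (mul : G → Γ → G → G)

theorem gprod_union_left (A B C : Set G) :
    gprod mul (A ∪ B) C = gprod mul A C ∪ gprod mul B C := by
  ext c
  simp only [gprod, Set.mem_ofPred_eq, Set.mem_union]
  grind

theorem gprod_union_right (A B C : Set G) :
    gprod mul A (B ∪ C) = gprod mul A B ∪ gprod mul A C := by
  ext c
  simp only [gprod, Set.mem_ofPred_eq, Set.mem_union]
  grind

theorem gprod_univ_gprod_subset
    (star : ∀ (a b c : G) (α β : Γ), mul a α (mul b β c) = mul b α (mul a β c)) (A : Set G) :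
    gprod mul Set.univ (gprod mul A Set.univ) ⊆ gprod mul A Set.univ := by
  rintro _ ⟨g, -, _, ⟨a, ha, x, -, δ, rfl⟩, γ, rfl⟩
  exact ⟨a, ha, mul g δ x, trivial, γ, star g a x γ δ⟩

theorem gprod_gprod_univ_subset
    (inv : ∀ (a b c : G) (γ δ : Γ), mul (mul a γ b) δ c = mul (mul c γ b) δ a) (A : Set G) :
    gprod mul (gprod mul A Set.univ) Set.univ ⊆ gprod mul Set.univ A := by
  rintro _ ⟨_, ⟨a, ha, x, -, δ, rfl⟩, g, -, γ, rfl⟩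
  exact ⟨mul g δ x, trivial, a, ha, γ, inv a x g δ γ⟩

end

theorem stmt_3 {G Γ : Type*} (mul : G → Γ → G → G)
    (inv : ∀ (a b c : G) (γ δ : Γ), mul (mul a γ b) δ c = mul (mul c γ b) δ a)
    (star : ∀ (a b c : G) (α β : Γ), mul a α (mul b β c) = mul b α (mul a β c))
    (L : Set G) (hL : gprod mul Set.univ L ⊆ L) :
    gprod mul Set.univ (L ∪ gprod mul L Set.univ) ⊆ L ∪ gprod mul L Set.univ ∧
    gprod mul (L ∪ gprod mul L Set.univ) Set.univ ⊆ L ∪ gprod mul L Set.univ := by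
  constructor
  · rw [gprod_union_right]
    exact Set.union_subset_union hL (gprod_univ_gprod_subset mul star L)
  · rw [gprod_union_left]
    exact Set.union_subset Set.subset_union_right
      ((gprod_gprod_univ_subset mul inv L).trans (hL.trans Set.subset_union_left))
end

section
/- If a Γ-AG-groupoid G has a right identity e (i.e., aγe = a for all a ∈ G, γ ∈ Γ), then e is also a left identity, G is commutative (aγb = bγa) and associative ((aαb)βc = aα(bβc)); hence G is a commutative Γ-semigroup. -/
theorem stmt_5 {G Γ : Type*} (mul : G → Γ → G → G)
    (inv : ∀ (a b c : G) (γ δ : Γ), mul (mul a γ b) δ c = mul (mul c γ b) δ a)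
    (e : G) (he : ∀ (a : G) (γ : Γ), mul a γ e = a) :
    (∀ (a : G) (γ : Γ), mul e γ a = a) ∧
    (∀ (a b : G) (γ : Γ), mul a γ b = mul b γ a) ∧
    (∀ (a b c : G) (α β : Γ), mul (mul a α b) β c = mul a α (mul b β c)) := by
  have hl : ∀ (a : G) (γ : Γ), mul e γ a = a := by
    intro a γ
    have h := inv a e e γ γ
    rw [he, he, he] at h
    exact h.symm
  have hI : ∀ (a b : G) (α β : Γ), mul a α b = mul b β a := by
    intro a b α β
    have h := inv e a b β α
    rw [hl] at h
    rw [h, he]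
  refine ⟨hl, fun a b γ => hI a b γ γ, ?_⟩
  intro a b c α β
  rw [inv, hI c b α β, hI (mul b β c) a β α]
end

section
/- If B₁ and B₂ are Γ-bi-ideals of a Γ-AG**-groupoid G with GΓG = G (or using the stated computation), then B₁ΓB₂ is also a Γ-bi-ideal of G, i.e., ((B₁ΓB₂)ΓG)Γ(B₁ΓB₂) ⊆ B₁ΓB₂. -/
section

variable {G Γ : Type*} {mul : G → Γ → G → G}

theorem mul_mem_gprod {A B : Set G} {a b : G} (ha : a ∈ A) (hb : b ∈ B) (γ : Γ) :
    mul a γ b ∈ gprod mul A B :=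
  ⟨a, ha, b, hb, γ, rfl⟩

theorem medial
    (inv : ∀ (a b c : G) (γ δ : Γ), mul (mul a γ b) δ c = mul (mul c γ b) δ a)
    (star : ∀ (a b c : G) (α β : Γ), mul a α (mul b β c) = mul b α (mul a β c))
    (a b c d : G) (α β γ : Γ) :
    mul (mul a α b) β (mul c γ d) = mul (mul a α c) β (mul b γ d) :=
  calc mul (mul a α b) β (mul c γ d)
      = mul c β (mul (mul a α b) γ d) := star _ _ _ _ _
    _ = mul c β (mul (mul d α b) γ a) := by rw [inv a b d α γ]
    _ = mul (mul d α b) β (mul c γ a) := star _ _ _ _ _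
    _ = mul (mul (mul c γ a) α b) β d := inv _ _ _ _ _
    _ = mul (mul (mul b γ a) α c) β d := by rw [inv c a b γ α]
    _ = mul (mul d α c) β (mul b γ a) := (inv _ _ _ _ _).symm
    _ = mul b β (mul (mul d α c) γ a) := star _ _ _ _ _
    _ = mul b β (mul (mul a α c) γ d) := by rw [inv d c a α γ]
    _ = mul (mul a α c) β (mul b γ d) := star _ _ _ _ _

end

theorem stmt_8_general {G Γ : Type*} (mul : G → Γ → G → G)
    (inv : ∀ (a b c : G) (γ δ : Γ), mul (mul a γ b) δ c = mul (mul c γ b) δ a)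
    (star : ∀ (a b c : G) (α β : Γ), mul a α (mul b β c) = mul b α (mul a β c))
    (hG : gprod mul (Set.univ : Set G) Set.univ = Set.univ)
    (B₁ B₂ : Set G)
    (h₁' : gprod mul (gprod mul B₁ Set.univ) B₁ ⊆ B₁)
    (h₂' : gprod mul (gprod mul B₂ Set.univ) B₂ ⊆ B₂) :
    gprod mul (gprod mul (gprod mul B₁ B₂) Set.univ) (gprod mul B₁ B₂) ⊆
      gprod mul B₁ B₂ := by
  rintro _ ⟨_, ⟨_, ⟨b₁, hb₁, b₂, hb₂, γ₁, rfl⟩, g, -, δ, rfl⟩,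
    _, ⟨c₁, hc₁, c₂, hc₂, γ₂, rfl⟩, ε, rfl⟩
  obtain ⟨s, -, t, -, η, rfl⟩ : g ∈ gprod mul Set.univ Set.univ := hG.symm ▸ Set.mem_univ g
  rw [medial inv star b₁ b₂ s t, medial inv star (mul b₁ γ₁ s) (mul b₂ η t) c₁ c₂]
  exact mul_mem_gprod
    (h₁' (mul_mem_gprod (mul_mem_gprod hb₁ (Set.mem_univ s) γ₁) hc₁ δ))
    (h₂' (mul_mem_gprod (mul_mem_gprod hb₂ (Set.mem_univ t) η) hc₂ γ₂)) ε

theorem stmt_8 {G Γ : Type*} (mul : G → Γ → G → G)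
    (inv : ∀ (a b c : G) (γ δ : Γ), mul (mul a γ b) δ c = mul (mul c γ b) δ a)
    (star : ∀ (a b c : G) (α β : Γ), mul a α (mul b β c) = mul b α (mul a β c))
    (hG : gprod mul (Set.univ : Set G) Set.univ = Set.univ)
    (B₁ B₂ : Set G)
    (h₁ : gprod mul B₁ B₁ ⊆ B₁) (h₁' : gprod mul (gprod mul B₁ Set.univ) B₁ ⊆ B₁)
    (h₂ : gprod mul B₂ B₂ ⊆ B₂) (h₂' : gprod mul (gprod mul B₂ Set.univ) B₂ ⊆ B₂) :
    gprod mul (gprod mul (gprod mul B₁ B₂) Set.univ) (gprod mul B₁ B₂) ⊆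
      gprod mul B₁ B₂ :=
  stmt_8_general mul inv star hG B₁ B₂ h₁' h₂'
end

section
/- Every Γ-idempotent Γ-quasi-ideal Q (with QΓQ = Q and GΓQ ∩ QΓG ⊆ Q) of a Γ-AG-groupoid G is a Γ-bi-ideal of G, i.e., (QΓG)ΓQ ⊆ Q. -/
/-! `(QΓG)ΓQ` lies in `GΓQ` trivially, and also in `QΓG`: writing `q = q₁εq₂` (as `Q = QΓQ`),
two applications of the left invertive law give `((q₁εq₂)γg)δq' = (q'γq₁)δ(gεq₂) ∈ (QΓQ)ΓG = QΓG`.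
The quasi-ideal property then puts it in `Q`. -/

section

variable {G Γ : Type*} (mul : G → Γ → G → G)

theorem gprod_mono {A A' B B' : Set G} (hA : A ⊆ A') (hB : B ⊆ B') :
    gprod mul A B ⊆ gprod mul A' B' := by
  rintro _ ⟨a, ha, b, hb, γ, rfl⟩
  exact ⟨a, hA ha, b, hB hb, γ, rfl⟩

theorem gprod_gprod_gprod_subset
    (left_invertive : ∀ (a b c : G) (γ δ : Γ), mul (mul a γ b) δ c = mul (mul c γ b) δ a)
    (A B C D : Set G) :
    gprod mul (gprod mul (gprod mul A B) C) D ⊆ gprod mul (gprod mul D A) (gprod mul C B) := by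
  rintro _ ⟨_, ⟨_, ⟨a, ha, b, hb, ε, rfl⟩, c, hc, γ, rfl⟩, d, hd, δ, rfl⟩
  refine ⟨mul d γ a, ⟨d, hd, a, ha, γ, rfl⟩, mul c ε b, ⟨c, hc, b, hb, ε, rfl⟩, δ, ?_⟩
  rw [left_invertive a b c, left_invertive _ a d]

end

theorem stmt_9 {G Γ : Type*} (mul : G → Γ → G → G)
    (inv : ∀ (a b c : G) (γ δ : Γ), mul (mul a γ b) δ c = mul (mul c γ b) δ a)
    (Q : Set G) (hidem : gprod mul Q Q = Q)
    (hquasi : gprod mul Set.univ Q ∩ gprod mul Q Set.univ ⊆ Q) :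
    gprod mul (gprod mul Q Set.univ) Q ⊆ Q := by
  have hleft : gprod mul (gprod mul Q Set.univ) Q ⊆ gprod mul Set.univ Q :=
    gprod_mono mul (Set.subset_univ _) subset_rfl
  have hright : gprod mul (gprod mul Q Set.univ) Q ⊆ gprod mul Q Set.univ :=
    calc gprod mul (gprod mul Q Set.univ) Q
        = gprod mul (gprod mul (gprod mul Q Q) Set.univ) Q := by rw [hidem]
      _ ⊆ gprod mul (gprod mul Q Q) (gprod mul Set.univ Q) :=
        gprod_gprod_gprod_subset mul inv Q Q Set.univ Q
      _ ⊆ gprod mul Q Set.univ := by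
        rw [hidem]
        exact gprod_mono mul subset_rfl (Set.subset_univ _)
  exact (Set.subset_inter hleft hright).trans hquasi
end

section
/- If G is a Γ-AG**-groupoid, then for every g ∈ G, the set gΓG satisfies ((gΓG)ΓG)Γ(gΓG) ⊆ gΓG, and GΓg satisfies ((GΓg)ΓG)Γ(GΓg) ⊆ GΓg (i.e., both are Γ-bi-ideal-like sets). -/
/-! Both inclusions hold with arbitrary sets in place of the inner factors. The left identity
`a ε (g α z) = g ε (a α z)` shows `A Γ (gΓG) ⊆ gΓG` for every `A`. For the right-hand sets, the
identity `(p δ y) ε (z α g) = ((z α p) δ y) ε g`, valid for all `p, y, z`, shows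
`(GΓG) Γ (GΓg) ⊆ GΓg`. -/

section GammaAGStarStar

variable {G Γ : Type*} (mul : G → Γ → G → G)

theorem gprod_subset_gprod_singleton_univ
    (star : ∀ (a b c : G) (α β : Γ), mul a α (mul b β c) = mul b α (mul a β c))
    (A : Set G) (g : G) :
    gprod mul A (gprod mul {g} Set.univ) ⊆ gprod mul {g} Set.univ := by
  rintro t ⟨a, -, -, ⟨g, rfl, z, -, α, rfl⟩, ε, rfl⟩
  exact ⟨g, rfl, mul a α z, trivial, ε, star a g z ε α⟩

theorem mul_mul_mul_eq_mul_mul_mul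
    (inv : ∀ (a b c : G) (γ δ : Γ), mul (mul a γ b) δ c = mul (mul c γ b) δ a)
    (star : ∀ (a b c : G) (α β : Γ), mul a α (mul b β c) = mul b α (mul a β c))
    (p y z g : G) (α δ ε : Γ) :
    mul (mul p δ y) ε (mul z α g) = mul (mul (mul z α p) δ y) ε g :=
  calc mul (mul p δ y) ε (mul z α g)
      = mul z ε (mul (mul p δ y) α g) := star _ _ _ _ _
    _ = mul z ε (mul (mul g δ y) α p) := by rw [inv]
    _ = mul (mul g δ y) ε (mul z α p) := star _ _ _ _ _
    _ = mul (mul (mul z α p) δ y) ε g := inv _ _ _ _ _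

theorem gprod_gprod_subset_gprod_univ_singleton
    (inv : ∀ (a b c : G) (γ δ : Γ), mul (mul a γ b) δ c = mul (mul c γ b) δ a)
    (star : ∀ (a b c : G) (α β : Γ), mul a α (mul b β c) = mul b α (mul a β c))
    (A B : Set G) (g : G) :
    gprod mul (gprod mul A B) (gprod mul Set.univ {g}) ⊆ gprod mul Set.univ {g} := by
  rintro t ⟨-, ⟨p, -, y, -, δ, rfl⟩, -, ⟨z, -, g, rfl, α, rfl⟩, ε, rfl⟩
  exact ⟨mul (mul z α p) δ y, trivial, g, rfl, ε,
    mul_mul_mul_eq_mul_mul_mul mul inv star p y z g α δ ε⟩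

end GammaAGStarStar

theorem stmt_13 {G Γ : Type*} (mul : G → Γ → G → G)
    (inv : ∀ (a b c : G) (γ δ : Γ), mul (mul a γ b) δ c = mul (mul c γ b) δ a)
    (star : ∀ (a b c : G) (α β : Γ), mul a α (mul b β c) = mul b α (mul a β c))
    (g : G) :
    gprod mul (gprod mul (gprod mul {g} Set.univ) Set.univ) (gprod mul {g} Set.univ)
      ⊆ gprod mul {g} Set.univ ∧
    gprod mul (gprod mul (gprod mul Set.univ {g}) Set.univ) (gprod mul Set.univ {g})
      ⊆ gprod mul Set.univ {g} :=
  ⟨gprod_subset_gprod_singleton_univ mul star _ g,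
    gprod_gprod_subset_gprod_univ_singleton mul inv star _ _ g⟩
end

section
/- If G is a regular Γ-AG-groupoid and B is a Γ-bi-ideal of G, then (BΓG)ΓB = B. -/
theorem subset_gprod_gprod_univ_of_regular {G Γ : Type*} (mul : G → Γ → G → G)
    (reg : ∀ a : G, ∃ (x : G) (α β : Γ), a = mul (mul a α x) β a) (B : Set G) :
    B ⊆ gprod mul (gprod mul B Set.univ) B := by
  intro b hb
  obtain ⟨x, α, β, hx⟩ := reg b
  exact ⟨mul b α x, ⟨b, hb, x, Set.mem_univ x, α, rfl⟩, b, hb, β, hx⟩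

theorem stmt_14_general {G Γ : Type*} (mul : G → Γ → G → G)
    (reg : ∀ a : G, ∃ (x : G) (α β : Γ), a = mul (mul a α x) β a)
    (B : Set G) (hB : gprod mul (gprod mul B Set.univ) B ⊆ B) :
    gprod mul (gprod mul B Set.univ) B = B :=
  hB.antisymm (subset_gprod_gprod_univ_of_regular mul reg B)

theorem stmt_14 {G Γ : Type*} (mul : G → Γ → G → G)
    (inv : ∀ (a b c : G) (γ δ : Γ), mul (mul a γ b) δ c = mul (mul c γ b) δ a)
    (reg : ∀ a : G, ∃ (x : G) (α β : Γ), a = mul (mul a α x) β a)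
    (B : Set G) (hB : gprod mul (gprod mul B Set.univ) B ⊆ B) :
    gprod mul (gprod mul B Set.univ) B = B :=
  stmt_14_general mul reg B hB
end

section
/- Any Γ-ideal of a regular Γ-AG-groupoid G is Γ-semiprime: if P is a Γ-ideal and A is a Γ-ideal with AΓA ⊆ P, then A ⊆ P. -/
theorem subset_gprod_self_of_regular {G Γ : Type*} (mul : G → Γ → G → G)
    (reg : ∀ a : G, ∃ (x : G) (α β : Γ), a = mul (mul a α x) β a)
    {A : Set G} (hAr : gprod mul A Set.univ ⊆ A) : A ⊆ gprod mul A A := by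
  intro a ha
  obtain ⟨x, α, β, hx⟩ := reg a
  have hax : mul a α x ∈ A := hAr ⟨a, ha, x, trivial, α, rfl⟩
  exact ⟨mul a α x, hax, a, ha, β, hx⟩

theorem stmt_18_general {G Γ : Type*} (mul : G → Γ → G → G)
    (reg : ∀ a : G, ∃ (x : G) (α β : Γ), a = mul (mul a α x) β a)
    (P A : Set G)
    (hAr : gprod mul A Set.univ ⊆ A)
    (h : gprod mul A A ⊆ P) : A ⊆ P :=
  (subset_gprod_self_of_regular mul reg hAr).trans h

theorem stmt_18 {G Γ : Type*} (mul : G → Γ → G → G)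
    (inv : ∀ (a b c : G) (γ δ : Γ), mul (mul a γ b) δ c = mul (mul c γ b) δ a)
    (reg : ∀ a : G, ∃ (x : G) (α β : Γ), a = mul (mul a α x) β a)
    (P A : Set G)
    (hPl : gprod mul Set.univ P ⊆ P) (hPr : gprod mul P Set.univ ⊆ P)
    (hAl : gprod mul Set.univ A ⊆ A) (hAr : gprod mul A Set.univ ⊆ A)
    (h : gprod mul A A ⊆ P) : A ⊆ P :=
  stmt_18_general mul reg P A hAr h
end

section
/- In a regular Γ-AG-groupoid G, the set of Γ-ideals forms a semilattice under the operation A ∘ B = AΓB: the product of two Γ-ideals is a Γ-ideal, the operation is commutative (AΓB = BΓA), associative ((AΓB)ΓC = AΓ(BΓC)), and idempotent (AΓA = A). -/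
section GammaIdeal

variable {G Γ : Type*}

def IsLeftGammaIdeal (mul : G → Γ → G → G) (I : Set G) : Prop :=
  gprod mul Set.univ I ⊆ I

def IsRightGammaIdeal (mul : G → Γ → G → G) (I : Set G) : Prop :=
  gprod mul I Set.univ ⊆ I

def IsGammaRegular (mul : G → Γ → G → G) : Prop :=
  ∀ a : G, ∃ (x : G) (α β : Γ), a = mul (mul a α x) β a

variable {mul : G → Γ → G → G} {X Y : Set G}

theorem IsLeftGammaIdeal.inter (hX : IsLeftGammaIdeal mul X) (hY : IsLeftGammaIdeal mul Y) :
    IsLeftGammaIdeal mul (X ∩ Y) := by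
  rintro _ ⟨a, -, b, ⟨hbX, hbY⟩, γ, rfl⟩
  exact ⟨hX ⟨a, trivial, b, hbX, γ, rfl⟩, hY ⟨a, trivial, b, hbY, γ, rfl⟩⟩

theorem IsRightGammaIdeal.inter (hX : IsRightGammaIdeal mul X) (hY : IsRightGammaIdeal mul Y) :
    IsRightGammaIdeal mul (X ∩ Y) := by
  rintro _ ⟨a, ⟨haX, haY⟩, b, -, γ, rfl⟩
  exact ⟨hX ⟨a, haX, b, trivial, γ, rfl⟩, hY ⟨a, haY, b, trivial, γ, rfl⟩⟩

theorem gprod_subset_inter (hX : IsRightGammaIdeal mul X) (hY : IsLeftGammaIdeal mul Y) :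
    gprod mul X Y ⊆ X ∩ Y := by
  rintro _ ⟨a, ha, b, hb, γ, rfl⟩
  exact ⟨hX ⟨a, ha, b, trivial, γ, rfl⟩, hY ⟨a, trivial, b, hb, γ, rfl⟩⟩

theorem inter_subset_gprod (reg : IsGammaRegular mul) (hX : IsRightGammaIdeal mul X) :
    X ∩ Y ⊆ gprod mul X Y := by
  rintro c ⟨hcX, hcY⟩
  obtain ⟨x, α, β, hc⟩ := reg c
  exact ⟨mul c α x, hX ⟨c, hcX, x, trivial, α, rfl⟩, c, hcY, β, hc⟩

theorem gprod_eq_inter (reg : IsGammaRegular mul) (hX : IsRightGammaIdeal mul X)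
    (hY : IsLeftGammaIdeal mul Y) : gprod mul X Y = X ∩ Y :=
  (gprod_subset_inter hX hY).antisymm (inter_subset_gprod reg hX)

end GammaIdeal

theorem stmt_19_general {G Γ : Type*} (mul : G → Γ → G → G)
    (reg : ∀ a : G, ∃ (x : G) (α β : Γ), a = mul (mul a α x) β a)
    (A B C : Set G)
    (hAl : gprod mul Set.univ A ⊆ A) (hAr : gprod mul A Set.univ ⊆ A)
    (hBl : gprod mul Set.univ B ⊆ B) (hBr : gprod mul B Set.univ ⊆ B)
    (hCl : gprod mul Set.univ C ⊆ C) :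
    (gprod mul Set.univ (gprod mul A B) ⊆ gprod mul A B ∧
      gprod mul (gprod mul A B) Set.univ ⊆ gprod mul A B) ∧
    gprod mul A B = gprod mul B A ∧
    gprod mul (gprod mul A B) C = gprod mul A (gprod mul B C) ∧
    gprod mul A A = A := by
  have hAB : gprod mul A B = A ∩ B := gprod_eq_inter reg hAr hBl
  refine ⟨⟨?_, ?_⟩, ?_, ?_, ?_⟩
  · rw [hAB]
    exact IsLeftGammaIdeal.inter hAl hBl
  · rw [hAB]
    exact IsRightGammaIdeal.inter hAr hBr
  · rw [hAB, gprod_eq_inter reg hBr hAl, Set.inter_comm]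
  · rw [hAB, gprod_eq_inter reg hBr hCl, gprod_eq_inter reg (IsRightGammaIdeal.inter hAr hBr) hCl,
      gprod_eq_inter reg hAr (IsLeftGammaIdeal.inter hBl hCl), Set.inter_assoc]
  · rw [gprod_eq_inter reg hAr hAl, Set.inter_self]

theorem stmt_19 {G Γ : Type*} (mul : G → Γ → G → G)
    (inv : ∀ (a b c : G) (γ δ : Γ), mul (mul a γ b) δ c = mul (mul c γ b) δ a)
    (reg : ∀ a : G, ∃ (x : G) (α β : Γ), a = mul (mul a α x) β a)
    (A B C : Set G)
    (hAl : gprod mul Set.univ A ⊆ A) (hAr : gprod mul A Set.univ ⊆ A)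
    (hBl : gprod mul Set.univ B ⊆ B) (hBr : gprod mul B Set.univ ⊆ B)
    (hCl : gprod mul Set.univ C ⊆ C) (hCr : gprod mul C Set.univ ⊆ C) :
    (gprod mul Set.univ (gprod mul A B) ⊆ gprod mul A B ∧
      gprod mul (gprod mul A B) Set.univ ⊆ gprod mul A B) ∧
    gprod mul A B = gprod mul B A ∧
    gprod mul (gprod mul A B) C = gprod mul A (gprod mul B C) ∧
    gprod mul A A = A :=
  stmt_19_general mul reg A B C hAl hAr hBl hBr hCl
end
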